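/- Let N ≥ 2 be an integer, and for 0 ≤ n ≤ N−2 let a_n, b_n be real numbers and c_n complex numbers satisfying the reflection-symmetry conditions a_n = a_{N−2−n}, b_n = b_{N−2−n}, c_n = c_{N−2−n}. Take g = −1, so ψ^(−1) = (−e_{(0,1)} − e_{(1,0)})/√2. Define the operator H = Σ_{n=0}^{N−2} T_{n,n+1} on the N-qubit space, where T_{n,n+1} is the two-site embedding of the 4×4 matrix a_n|ψ^(−1)⟩⟨ψ^(−1)| + b_n|e_{(1,1)}⟩⟨e_{(1,1)}| + c_n|ψ^(−1)⟩⟨e_{(1,1)}| + conj(c_n)|e_{(1,1)}⟩⟨ψ^(−1)|. Let R be the reflection operator on the N-qubit space, (R v)(s) = v(s ∘ ρ) where ρ(j) = N−1−j. Then R ∘ H ∘ R = H. -/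

import Mathlib

open scoped BigOperators

noncomputable section

/-- The `N`-qubit space: complex functions on configurations `Fin N → Fin 2`. -/
abbrev NQubit (N : ℕ) : Type := (Fin N → Fin 2) → ℂ

/-- The two-qubit basis vector `e_{(a,b)}`. -/
def eBasis (a b : Fin 2) : Fin 2 × Fin 2 → ℂ := Pi.single (a, b) (1 : ℂ)

/-- The two-qubit vector `ψ^(g) = (conj g · e_{(0,1)} − e_{(1,0)}) / √(1+|g|²)`. -/
def psiVec (g : ℂ) : Fin 2 × Fin 2 → ℂ :=
  (Real.sqrt (1 + ‖g‖ ^ 2))⁻¹ •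
    ((starRingEnd ℂ g) • eBasis 0 1 - eBasis 1 0)

/-- The two-qubit basis vector `e_{(1,1)}`. -/
def e11 : Fin 2 × Fin 2 → ℂ := eBasis 1 1

/-- The rank-one matrix `|v⟩⟨w|`, with entries `v p * conj (w q)`. -/
def outer (v w : Fin 2 × Fin 2 → ℂ) : Matrix (Fin 2 × Fin 2) (Fin 2 × Fin 2) ℂ :=
  Matrix.vecMulVec v (star w)

/-- The 4×4 PVBS projector matrix `P^(g) = |e_{(1,1)}⟩⟨e_{(1,1)}| + |ψ^(g)⟩⟨ψ^(g)|`. -/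
def pvbsProj (g : ℂ) : Matrix (Fin 2 × Fin 2) (Fin 2 × Fin 2) ℂ :=
  outer e11 e11 + outer (psiVec g) (psiVec g)

/-- The embedding of a 4×4 matrix `m` as an operator acting on sites `n`, `n'` of the
`N`-qubit chain: `⟨e_s, m_{n,n'} e_t⟩ = m (s n, s n') (t n, t n')` if `s = t` away from
`{n, n'}`, and `0` otherwise. -/
def twoSite (N : ℕ) (m : Matrix (Fin 2 × Fin 2) (Fin 2 × Fin 2) ℂ) (n n' : Fin N) :
    Matrix (Fin N → Fin 2) (Fin N → Fin 2) ℂ :=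
  fun s t =>
    if ∀ j : Fin N, j ≠ n → j ≠ n' → s j = t j then m (s n, s n') (t n, t n') else 0


/-- The local PVBS-deformed interaction
`a|ψ^(g)⟩⟨ψ^(g)| + b|e₁₁⟩⟨e₁₁| + c|ψ^(g)⟩⟨e₁₁| + conj c |e₁₁⟩⟨ψ^(g)|`. -/
def locMat (a b : ℝ) (c g : ℂ) : Matrix (Fin 2 × Fin 2) (Fin 2 × Fin 2) ℂ :=
  (a : ℂ) • outer (psiVec g) (psiVec g) + (b : ℂ) • outer e11 e11 +
    c • outer (psiVec g) e11 + (starRingEnd ℂ c) • outer e11 (psiVec g)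

/-- The PVBS-deformed Hamiltonian `H = ∑_{n=0}^{N-2} T_{n,n+1}` on the `N`-qubit chain. -/
def pvbsHam (N : ℕ) (a b : ℕ → ℝ) (c : ℕ → ℂ) (g : ℂ) :
    Matrix (Fin N → Fin 2) (Fin N → Fin 2) ℂ :=
  ∑ n : Fin (N - 1),
    twoSite N (locMat (a n) (b n) (c n) g)
      ⟨(n : ℕ), by have := n.isLt; omega⟩ ⟨(n : ℕ) + 1, by have := n.isLt; omega⟩

/-- The reflection operator, `(R v)(s) = v (s ∘ ρ)` with `ρ(j) = N−1−j`. -/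
def reflOp (N : ℕ) (v : NQubit N) : NQubit N := fun s => v (fun j => s (Fin.rev j))

/-!
At `g = −1` the vector `ψ` is symmetric under exchanging the two qubits, so every local
interaction `locMat a b c (−1)` is invariant under swapping its two sites. Reflecting the chain
sends the bond `(n, n+1)` to the bond `(N−2−n, N−1−n)` with its two sites exchanged, so by swap
invariance and the symmetry of the coefficients, conjugation by `R` only permutes the bond terms
of `H`.
-/

open scoped Matrix

theorem Matrix.mulVec_comp_of_submatrix_eq {ι R : Type*} [Fintype ι] [NonUnitalNonAssocSemiring R]
    {M : Matrix ι ι R} {σ : Equiv.Perm ι} (hM : M.submatrix σ σ = M) (v : ι → R) :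
    M *ᵥ (v ∘ σ) = (M *ᵥ v) ∘ σ := by
  conv_lhs => rw [← hM]
  rw [Matrix.submatrix_mulVec_equiv, Function.comp_assoc, Equiv.self_comp_symm, Function.comp_id]

theorem psiVec_neg_one_swap (p : Fin 2 × Fin 2) : psiVec (-1) p.swap = psiVec (-1) p := by
  obtain ⟨x, y⟩ := p
  fin_cases x <;> fin_cases y <;> simp [psiVec, eBasis]

theorem e11_swap (p : Fin 2 × Fin 2) : e11 p.swap = e11 p := by
  obtain ⟨x, y⟩ := p
  fin_cases x <;> fin_cases y <;> simp [e11, eBasis]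

theorem locMat_neg_one_submatrix_swap (a b : ℝ) (c : ℂ) :
    (locMat a b c (-1)).submatrix Prod.swap Prod.swap = locMat a b c (-1) := by
  ext p q
  simp only [locMat, outer, Matrix.submatrix_apply, Matrix.add_apply, Matrix.smul_apply,
    Matrix.vecMulVec_apply, Pi.star_apply, psiVec_neg_one_swap, e11_swap]

section TwoSite

variable {N : ℕ} (m : Matrix (Fin 2 × Fin 2) (Fin 2 × Fin 2) ℂ) (i j : Fin N)

theorem twoSite_swap :
    twoSite N m j i = twoSite N (m.submatrix Prod.swap Prod.swap) i j := by
  ext s t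
  simp only [twoSite, Matrix.submatrix_apply, Prod.swap_prod_mk]
  congr 1
  exact propext <| forall_congr' fun _ => imp.swap

theorem twoSite_submatrix_perm (σ : Equiv.Perm (Fin N)) :
    (twoSite N m i j).submatrix (· ∘ σ) (· ∘ σ) = twoSite N m (σ i) (σ j) := by
  ext s t
  simp only [twoSite, Matrix.submatrix_apply, Function.comp_apply]
  congr 1
  refine propext (σ.forall_congr fun k => ?_)
  simp only [ne_eq, σ.apply_eq_iff_eq]

end TwoSite

def configRev (N : ℕ) : Equiv.Perm (Fin N → Fin 2) :=
  Function.Involutive.toPerm (· ∘ Fin.rev) fun s => funext fun j => congrArg s (Fin.rev_rev j)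

theorem reflOp_eq_comp_configRev (N : ℕ) (v : NQubit N) : reflOp N v = v ∘ configRev N := rfl

theorem twoSite_bond_submatrix_configRev {N : ℕ} {m : Matrix (Fin 2 × Fin 2) (Fin 2 × Fin 2) ℂ}
    (hm : m.submatrix Prod.swap Prod.swap = m) (n : Fin (N - 1)) :
    (twoSite N m ⟨n, by omega⟩ ⟨n + 1, by omega⟩).submatrix (configRev N) (configRev N) =
      twoSite N m ⟨n.rev, by omega⟩ ⟨n.rev + 1, by omega⟩ := by
  have h₁ : (⟨n.rev, by omega⟩ : Fin N) = Fin.revPerm ⟨n + 1, by omega⟩ := by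
    ext; simp only [Fin.revPerm_apply, Fin.val_rev]; omega
  have h₂ : (⟨n.rev + 1, by omega⟩ : Fin N) = Fin.revPerm ⟨n, by omega⟩ := by
    ext; simp only [Fin.revPerm_apply, Fin.val_rev]; omega
  conv_rhs => rw [← hm, ← twoSite_swap, h₁, h₂]
  exact twoSite_submatrix_perm _ _ _ Fin.revPerm

theorem pvbsHam_neg_one_submatrix_configRev {N : ℕ} {a b : ℕ → ℝ} {c : ℕ → ℂ}
    (hsym : ∀ n ≤ N - 2, a n = a (N - 2 - n) ∧ b n = b (N - 2 - n) ∧ c n = c (N - 2 - n)) :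
    (pvbsHam N a b c (-1)).submatrix (configRev N) (configRev N) = pvbsHam N a b c (-1) := by
  ext s t
  simp only [Matrix.submatrix_apply, pvbsHam, Matrix.sum_apply]
  rw [← Equiv.sum_comp Fin.revPerm (fun n => twoSite N _ _ _ s t)]
  refine Fintype.sum_congr _ _ fun n => ?_
  have hrev : (n.rev : ℕ) = N - 2 - n := by rw [Fin.val_rev]; omega
  obtain ⟨ha, hb, hc⟩ := hsym n (by omega)
  rw [← Matrix.submatrix_apply (twoSite N _ _ _) (configRev N) (configRev N),
    twoSite_bond_submatrix_configRev (locMat_neg_one_submatrix_swap _ _ _)]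
  simp only [Fin.revPerm_apply, hrev, ha, hb, hc]

theorem pvbsHam_reflection_symmetry_neg_one_general (N : ℕ)
    (a b : ℕ → ℝ) (c : ℕ → ℂ)
    (hsym : ∀ n ≤ N - 2, a n = a (N - 2 - n) ∧ b n = b (N - 2 - n) ∧ c n = c (N - 2 - n)) :
    ∀ v : NQubit N,
      reflOp N ((pvbsHam N a b c (-1)).mulVec (reflOp N v)) =
        (pvbsHam N a b c (-1)).mulVec v := by
  intro v
  have hR : Function.Involutive (configRev N) := Function.Involutive.toPerm_involutive _
  rw [reflOp_eq_comp_configRev, reflOp_eq_comp_configRev,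
    Matrix.mulVec_comp_of_submatrix_eq (pvbsHam_neg_one_submatrix_configRev hsym),
    Function.comp_assoc, hR.comp_self, Function.comp_id]

/-- Reflection symmetry of the PVBS-deformed Hamiltonian at `g = −1` (supplementary
material): for reflection-symmetric coefficients, `R ∘ H ∘ R = H`. -/
theorem pvbsHam_reflection_symmetry_neg_one (N : ℕ) (hN : 2 ≤ N)
    (a b : ℕ → ℝ) (c : ℕ → ℂ)
    (hsym : ∀ n ≤ N - 2, a n = a (N - 2 - n) ∧ b n = b (N - 2 - n) ∧ c n = c (N - 2 - n)) :
    ∀ v : NQubit N,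
      reflOp N ((pvbsHam N a b c (-1)).mulVec (reflOp N v)) =
        (pvbsHam N a b c (-1)).mulVec v :=
  pvbsHam_reflection_symmetry_neg_one_general N a b c hsym
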